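/- Let A be a constant game and let Δ be a legal run of the parallel disjunction ⫯ᴸ¬A ∨ ⫰ᵀA, with Σ = Δ^{1.} (the run in the ⫯ᴸ¬A component) and Π = Δ^{2.} (the run in the ⫰ᵀA component). Suppose that either (a) Π contains infinitely many switch moves, or (b) Π contains finitely many switch moves, Σ contains finitely many switch moves, and Σ^{≼t'} = ¬(Π^{≼s'}), where s is the last switch move of Π (the empty bitstring if there are none), t is the last switch move of Σ (the empty bitstring if there are none), and s', t' are the results of appending infinitely many 0s to s and t respectively. Then Δ is a ⊤-won run of ⫯ᴸ¬A ∨ ⫰ᵀA. -/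
import Mathlib


/- ============================================================
   Computability Logic: runs, constant games, delays, static
   games, and the tight/loose toggling-branching recurrences.
   ============================================================ -/

/-- The two players: `top` (⊤, the machine) and `bot` (⊥, the environment). -/
inductive Player : Type
  | top : Player
  | bot : Player
deriving DecidableEq

/-- The adversary (opposite) of a player. -/
def Player.opp : Player → Player
  | .top => .bot
  | .bot => .top

/-- Symbols of the fixed move alphabet: the bits `0` and `1`, the period `.`,
the colon `:`, and (countably many) other characters. -/
inductive CSym : Type
  | b0 : CSym
  | b1 : CSym
  | dot : CSym
  | colon : CSym
  | ch : ℕ → CSym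
deriving DecidableEq

/-- A move is a finite string over the fixed alphabet. -/
abbrev Move := List CSym

/-- A labmove is a move together with the label of the player who made it. -/
abbrev Labmove := Player × Move

/-- A run is a finite or infinite sequence of labmoves. -/
abbrev Run := Stream'.Seq Labmove

/-- A position is a finite run. -/
abbrev Position := List Labmove

/-- The symbol encoding a bit. -/
def bitSym (b : Bool) : CSym := if b then .b1 else .b0

/-- The move that is the bare bitstring `w`. -/
def bitsMove (w : List Bool) : Move := w.map bitSym

/-- The (replicative-style) move `w:`. -/
def repMove (w : List Bool) : Move := bitsMove w ++ [.colon]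

/-- The (non-replicative-style) move `w.α`. -/
def dotMove (w : List Bool) (α : Move) : Move := bitsMove w ++ (.dot :: α)

/-- Decode a move that is a bare bitstring. -/
def asBits : Move → Option (List Bool)
  | [] => some []
  | .b0 :: r => (asBits r).map (false :: ·)
  | .b1 :: r => (asBits r).map (true :: ·)
  | _ => none

/-- Decode a move of the form `w:` (`w` a bitstring). -/
def asRep : Move → Option (List Bool)
  | [.colon] => some []
  | .b0 :: r => (asRep r).map (false :: ·)
  | .b1 :: r => (asRep r).map (true :: ·)
  | _ => none

/-- Decode a move of the form `w.α` (`w` a bitstring, `α` a move), splitting at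
the (unique such) period. -/
def splitDot : Move → Option (List Bool × Move)
  | .dot :: r => some ([], r)
  | .b0 :: r => (splitDot r).map (fun p => (false :: p.1, p.2))
  | .b1 :: r => (splitDot r).map (fun p => (true :: p.1, p.2))
  | _ => none

/-- Infinite bitstrings. -/
abbrev IStr := ℕ → Bool

/-- The length-`n` initial segment of an infinite bitstring. -/
def prefOf (n : ℕ) (v : IStr) : List Bool := (List.range n).map v

/-- `u` is a finite initial segment of the infinite bitstring `v`. -/
def IsPref (u : List Bool) (v : IStr) : Prop := u = prefOf u.length v

instance (u : List Bool) (v : IStr) : Decidable (IsPref u v) := by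
  unfold IsPref; infer_instance

/-- The finite bitstring `w` with infinitely many `0`s appended. -/
def ezero (w : List Bool) : IStr := fun i => w.getD i false

/-- The finite bitstring `w` followed by the infinite bitstring `v`. -/
def capp (w : List Bool) (v : IStr) : IStr :=
  fun i => if i < w.length then w.getD i false else v (i - w.length)

/-- The indices of `s` whose entry is kept by the filtering function `p`. -/
def fmPred {α β : Type*} (p : α → Option β) (s : Stream'.Seq α) (i : ℕ) : Prop :=
  ∃ a, s.get? i = some a ∧ (p a).isSome

/-- `p` has at least `n+1` witnesses. -/
def HasNth (p : ℕ → Prop) (n : ℕ) : Prop :=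
  ∀ hf : (setOf p).Finite, n < hf.toFinset.card

open Classical in
/-- The subsequence of a (finite or infinite) sequence obtained by
filtering/translating its entries through `p`. -/
noncomputable def seqFilterMap {α β : Type*} (p : α → Option β) (s : Stream'.Seq α) :
    Stream'.Seq β := by
  refine ⟨fun k => if HasNth (fmPred p s) k
    then ((s.get? (Nat.nth (fmPred p s) k)).bind p) else none, ?_⟩
  intro n hn
  have hval : ∀ k, HasNth (fmPred p s) k →
      (if HasNth (fmPred p s) k then ((s.get? (Nat.nth (fmPred p s) k)).bind p) else none)
        ≠ none := by
    intro k hk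
    obtain ⟨a, ha, hpa⟩ := Nat.nth_mem (p := fmPred p s) k hk
    rw [if_pos hk, ha]
    simpa [Option.isSome_iff_ne_none] using hpa
  by_cases h : HasNth (fmPred p s) (n + 1)
  · exact absurd hn (hval n (fun hf => lt_of_le_of_lt (Nat.le_succ n) (h hf)))
  · exact if_neg h

/-- The filtered subsequence of a position (finite-run analogue of `seqFilterMap`). -/
def listFilterMap {β : Type*} (p : Labmove → Option β) (Φ : Position) : List β :=
  Φ.filterMap p

/-- The filtering function for `Ω^{≼v}`: keep labmoves `π u.α` with `u` an initial
segment of `v`, turning them into `π α`. -/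
def subFn (v : IStr) (lm : Labmove) : Option Labmove :=
  match splitDot lm.2 with
  | some (u, α) => if IsPref u v then some (lm.1, α) else none
  | none => none

/-- `Ω^{≼v}` for a run `Ω`. -/
noncomputable def subAt (v : IStr) (Γ : Run) : Run := seqFilterMap (subFn v) Γ

/-- `Φ^{≼v}` for a position `Φ`. -/
def subAtL (v : IStr) (Φ : Position) : Position := Φ.filterMap (subFn v)

/-- The result of changing every label in a run to its opposite. -/
def negRun (Γ : Run) : Run := Γ.map (fun lm => (lm.1.opp, lm.2))

/-- The subsequence of `π`-labeled moves of a run. -/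
noncomputable def subseqOf (π : Player) (Γ : Run) : Run :=
  seqFilterMap (fun lm => if lm.1 = π then some lm else none) Γ

/-- The subsequence of `π`-labeled moves of a position. -/
def subL (π : Player) (Φ : Position) : Position :=
  Φ.filter (fun lm => decide (lm.1 = π))

/-- The indices of the `π`-labeled moves of a run. -/
def labPred (π : Player) (Γ : Run) (i : ℕ) : Prop := ∃ m, Γ.get? i = some (π, m)

/-- `Δ` is a `π`-delay of `Γ`: (1) for both players `π'`, the subsequence of
`π'`-labeled moves of `Δ` is identical to that of `Γ`; (2) whenever the `n`-th
`π`-labeled move is made later than the `k`-th `¬π`-labeled move in `Γ`, so is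
it in `Δ`. -/
def Delay (π : Player) (Δ Γ : Run) : Prop :=
  (∀ π' : Player, subseqOf π' Δ = subseqOf π' Γ) ∧
  (∀ n k : ℕ, HasNth (labPred π Γ) n → HasNth (labPred π.opp Γ) k →
    Nat.nth (labPred π Γ) n > Nat.nth (labPred π.opp Γ) k →
    Nat.nth (labPred π Δ) n > Nat.nth (labPred π.opp Δ) k)

/-- A constant game: a set of legal runs and an assignment of winners. -/
structure Game where
  legal : Run → Prop
  wins : Run → Player

/-- Well-formedness of a constant game: the empty position is legal, and a run
is legal iff all of its finite initial segments are. -/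
def Game.IsGame (A : Game) : Prop :=
  A.legal (Stream'.Seq.ofList []) ∧
  ∀ Γ : Run, A.legal Γ ↔ ∀ n : ℕ, A.legal (Stream'.Seq.ofList (Stream'.Seq.take n Γ))

/-- The run `Γ` is `π`-illegal in `A`: its shortest illegal initial segment has
the form `⟨Φ, πα⟩`. -/
def Game.IllegalBy (A : Game) (π : Player) (Γ : Run) : Prop :=
  ∃ n : ℕ,
    (∀ m ≤ n, A.legal (Stream'.Seq.ofList (Stream'.Seq.take m Γ))) ∧
    ¬ A.legal (Stream'.Seq.ofList (Stream'.Seq.take (n + 1) Γ)) ∧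
    ∃ m : Move, Γ.get? n = some (π, m)

/-- `Γ` is a `π`-won run of `A`: either `Γ` is legal and `Wn` names `π`, or `Γ`
is `¬π`-illegal (an illegal run is won by the adversary of the first offender). -/
def Game.won (A : Game) (π : Player) (Γ : Run) : Prop :=
  (A.legal Γ ∧ A.wins Γ = π) ∨ A.IllegalBy π.opp Γ

/-- A constant game is static iff `π`-won runs are preserved by `π`-delays. -/
def Game.Static (A : Game) : Prop :=
  ∀ (π : Player) (Γ Δ : Run), Delay π Δ Γ → A.won π Γ → A.won π Δ

/-- The negation `¬A` of a constant game: the roles of the players are interchanged. -/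
def Game.neg (A : Game) : Game where
  legal Γ := A.legal (negRun Γ)
  wins Γ := (A.wins (negRun Γ)).opp

/-- `w` is an actual node of the position `Φ`: `w` is empty, or `w = u0` or
`w = u1` for some bitstring `u` such that `Φ` contains the move `u:`. -/
def ActualNode (Φ : Position) (w : List Bool) : Prop :=
  w = [] ∨ ∃ (u : List Bool) (b : Bool), w = u ++ [b] ∧ ∃ π : Player, (π, repMove u) ∈ Φ

/-- `w` is an outer actual node of `Φ`: an actual node that is not a proper
prefix of any other actual node of `Φ`. -/
def OuterNode (Φ : Position) (w : List Bool) : Prop :=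
  ActualNode Φ w ∧ ∀ w' : List Bool, ActualNode Φ w' → w <+: w' → w = w'

/-- `m` is a legal move by `π` in the legal position `Φ` of `⫰ᵀA`: a switch
move, a replicative move, or a non-replicative move. -/
def TightMove (A : Game) (Φ : Position) (π : Player) (m : Move) : Prop :=
  (π = .bot ∧ ∃ w : List Bool, asBits m = some w ∧ ActualNode Φ w) ∨
  (π = .bot ∧ ∃ w : List Bool, asRep m = some w ∧ OuterNode Φ w) ∨
  (∃ (w : List Bool) (α : Move), splitDot m = some (w, α) ∧ ActualNode Φ w ∧
    ∀ v : IStr, A.legal (Stream'.Seq.ofList (subAtL (capp w v) Φ ++ [(π, α)])))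

/-- The legal positions of `⫰ᵀA`. -/
inductive TightLegalPos (A : Game) : Position → Prop
  | nil : TightLegalPos A []
  | snoc {Φ : Position} {π : Player} {m : Move} :
      TightLegalPos A Φ → TightMove A Φ π m → TightLegalPos A (Φ ++ [(π, m)])

/-- The indices of the switch moves (by player `π`) of a run: `π`-labeled moves
whose move part is a bare bitstring. -/
def SwSetP (π : Player) (Γ : Run) : Set ℕ :=
  {i | ∃ (m : Move) (w : List Bool), Γ.get? i = some (π, m) ∧ asBits m = some w}

open Classical in
/-- The index of the last switch move (by `π`) of a run, when there are finitely
many and at least one (junk value `0` otherwise). -/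
noncomputable def lastSwitchIdxP (π : Player) (Γ : Run) : ℕ :=
  if h : (SwSetP π Γ).Finite ∧ (SwSetP π Γ).Nonempty then
    h.1.toFinset.max' (h.1.toFinset_nonempty.mpr h.2)
  else 0

open Classical in
/-- The bitstring of the last switch move (by `π`) of a run; the empty bitstring
if there are no switch moves (or infinitely many). -/
noncomputable def lastSwitchBitsP (π : Player) (Γ : Run) : List Bool :=
  if (SwSetP π Γ).Finite ∧ (SwSetP π Γ).Nonempty then
    ((Γ.get? (lastSwitchIdxP π Γ)).bind (fun lm => asBits lm.2)).getD []
  else []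

/-- The infinite bitstring `t`: the last (`⊥`-made) switch move of `Γ` with
infinitely many `0`s appended, or the infinite string of `0`s if there are no
switch moves. -/
noncomputable def tStream (Γ : Run) : IStr := ezero (lastSwitchBitsP .bot Γ)

open Classical in
/-- The tight toggling-branching recurrence `⫰ᵀA`. -/
noncomputable def tight (A : Game) : Game where
  legal Γ := ∀ n : ℕ, TightLegalPos A (Stream'.Seq.take n Γ)
  wins Γ :=
    if (SwSetP .bot Γ).Finite ∧ A.won .bot (subAt (tStream Γ) Γ) then .bot else .top

/-- The tight toggling-branching corecurrence `⫯ᵀA = ¬⫰ᵀ¬A`. -/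
noncomputable def cotight (A : Game) : Game := Game.neg (tight (Game.neg A))

/-- The shape of legal labmoves of `⫰ᴸA`: `⊥w` (a switch move) for a bitstring
`w`, or `πw.α`. -/
def LooseShape (lm : Labmove) : Prop :=
  (lm.1 = .bot ∧ ∃ w : List Bool, asBits lm.2 = some w) ∨
  (∃ (w : List Bool) (α : Move), splitDot lm.2 = some (w, α))

open Classical in
/-- The loose toggling-branching recurrence `⫰ᴸA`. -/
noncomputable def loose (A : Game) : Game where
  legal Γ := (∀ (i : ℕ) (lm : Labmove), Γ.get? i = some lm → LooseShape lm) ∧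
    ∀ v : IStr, A.legal (subAt v Γ)
  wins Γ :=
    if (SwSetP .bot Γ).Finite ∧ A.won .bot (subAt (tStream Γ) Γ) then .bot else .top

/-- The loose toggling-branching corecurrence `⫯ᴸA = ¬⫰ᴸ¬A`. -/
noncomputable def coloose (A : Game) : Game := Game.neg (loose (Game.neg A))

/-- The sequence of (bitstrings of) switch moves made by `π` in a run, in order. -/
noncomputable def swSeq (π : Player) (Γ : Run) : Stream'.Seq (List Bool) :=
  seqFilterMap (fun lm => if lm.1 = π then asBits lm.2 else none) Γ

/-- The move `i.α` (component prefix for parallel combinations). -/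
def compMove (i : ℕ) (α : Move) : Move := .ch i :: .dot :: α

/-- `Δ^{i.}`: the labmoves of the form `π i.α` of `Δ`, with the prefix `i.` removed. -/
noncomputable def proj (i : ℕ) (Δ : Run) : Run :=
  seqFilterMap (fun lm =>
    match lm.2 with
    | .ch j :: .dot :: α => if j = i then some (lm.1, α) else none
    | _ => none) Δ

open Classical in
/-- The parallel disjunction `A ∨ B`. -/
noncomputable def Game.por (A B : Game) : Game where
  legal Δ :=
    (∀ (k : ℕ) (lm : Labmove), Δ.get? k = some lm →
      ∃ (i : ℕ) (α : Move), (i = 1 ∨ i = 2) ∧ lm.2 = compMove i α) ∧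
    A.legal (proj 1 Δ) ∧ B.legal (proj 2 Δ)
  wins Δ :=
    if A.won .top (proj 1 Δ) ∨ B.won .top (proj 2 Δ) then .top else .bot

section Aux

lemma Player.opp_opp' (π : Player) : π.opp.opp = π := by cases π <;> rfl

lemma negRun_negRun (Γ : Run) : negRun (negRun Γ) = Γ := by
  apply Stream'.Seq.ext
  intro n
  rcases h : Γ.get? n with _ | lm
  · simp [negRun, Stream'.Seq.map_get?, h]
  · simp [negRun, Stream'.Seq.map_get?, h, Player.opp_opp']

lemma Game.neg_neg' (A : Game) : A.neg.neg = A := by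
  cases A with
  | mk l w =>
    refine congrArg₂ Game.mk ?_ ?_
    · funext Γ
      show l (negRun (negRun Γ)) = l Γ
      rw [negRun_negRun]
    · funext Γ
      show (w (negRun (negRun Γ))).opp.opp = w Γ
      rw [negRun_negRun, Player.opp_opp']

lemma seqFilterMap_map {α β γ δ : Type*} (f : α → β) (g : γ → δ)
    (p : β → Option δ) (q : α → Option γ)
    (h : ∀ a, p (f a) = (q a).map g) (s : Stream'.Seq α) :
    seqFilterMap p (s.map f) = (seqFilterMap q s).map g := by
  classical
  have hpred : fmPred p (s.map f) = fmPred q s := by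
    funext i
    apply propext
    constructor
    · rintro ⟨a, ha, hsa⟩
      rw [Stream'.Seq.map_get?] at ha
      rcases hb : s.get? i with _ | b
      · rw [hb] at ha; simp at ha
      · rw [hb] at ha
        simp only [Option.map_some] at ha
        obtain rfl : f b = a := by injection ha
        exact ⟨b, hb, by rw [h b] at hsa; simpa using hsa⟩
    · rintro ⟨a, ha, hsa⟩
      exact ⟨f a, by rw [Stream'.Seq.map_get?, ha]; rfl,
        by rw [h a]; simpa using hsa⟩
  apply Stream'.Seq.ext
  intro k
  have hl : (seqFilterMap p (s.map f)).get? k =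
      @ite _ (HasNth (fmPred p (s.map f)) k) (Classical.propDecidable _)
        (((s.map f).get? (Nat.nth (fmPred p (s.map f)) k)).bind p) none := rfl
  have hr : (seqFilterMap q s).get? k =
      @ite _ (HasNth (fmPred q s) k) (Classical.propDecidable _)
        ((s.get? (Nat.nth (fmPred q s) k)).bind q) none := rfl
  rw [Stream'.Seq.map_get?, hl, hr, hpred]
  by_cases hk : HasNth (fmPred q s) k
  · rw [if_pos hk, if_pos hk, Stream'.Seq.map_get?]
    rcases hb : s.get? (Nat.nth (fmPred q s) k) with _ | b
    · rfl
    · simp only [Option.map_some, Option.bind_some, h b]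
  · rw [if_neg hk, if_neg hk]; rfl

lemma subFn_neg (v : IStr) (lm : Labmove) :
    subFn v (lm.1.opp, lm.2) = (subFn v lm).map (fun x => (x.1.opp, x.2)) := by
  unfold subFn
  rcases splitDot lm.2 with _ | ⟨u, α⟩
  · rfl
  · by_cases hp : IsPref u v
    · simp [hp]
    · simp [hp]

lemma subAt_negRun (v : IStr) (Γ : Run) :
    subAt v (negRun Γ) = negRun (subAt v Γ) := by
  unfold subAt negRun
  exact seqFilterMap_map (fun lm => (lm.1.opp, lm.2)) (fun lm => (lm.1.opp, lm.2))
    (subFn v) (subFn v) (fun a => subFn_neg v a) Γ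

lemma SwSetP_negRun (π : Player) (Γ : Run) :
    SwSetP π (negRun Γ) = SwSetP π.opp Γ := by
  ext i
  simp only [SwSetP, Set.mem_setOf_eq, negRun, Stream'.Seq.map_get?]
  constructor
  · rintro ⟨m, w, hm, hw⟩
    rcases hb : Γ.get? i with _ | b
    · rw [hb] at hm; exact absurd hm (by simp)
    · rw [hb] at hm
      simp only [Option.map_some, Option.some.injEq] at hm
      refine ⟨m, w, ?_, hw⟩
      have h1 : b.1.opp = π := congrArg Prod.fst hm
      have h2 : b.2 = m := congrArg Prod.snd hm
      rw [← h1, ← h2, Player.opp_opp']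
  · rintro ⟨m, w, hm, hw⟩
    refine ⟨m, w, ?_, hw⟩
    rw [hm]
    show some ((π.opp).opp, m) = some (π, m)
    rw [Player.opp_opp']

lemma lastSwitchIdxP_negRun (Γ : Run) :
    lastSwitchIdxP .bot (negRun Γ) = lastSwitchIdxP .top Γ := by
  classical
  have h : SwSetP .bot (negRun Γ) = SwSetP .top Γ := SwSetP_negRun .bot Γ
  unfold lastSwitchIdxP
  by_cases hc : (SwSetP Player.top Γ).Finite ∧ (SwSetP Player.top Γ).Nonempty
  · have hc' : (SwSetP Player.bot (negRun Γ)).Finite ∧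
        (SwSetP Player.bot (negRun Γ)).Nonempty := by rw [h]; exact hc
    rw [dif_pos hc', dif_pos hc]
    apply le_antisymm
    · apply Finset.max'_le
      intro y hy
      apply Finset.le_max'
      rw [Set.Finite.mem_toFinset] at hy ⊢
      rwa [← h]
    · apply Finset.max'_le
      intro y hy
      apply Finset.le_max'
      rw [Set.Finite.mem_toFinset] at hy ⊢
      rwa [h]
  · have hc' : ¬((SwSetP Player.bot (negRun Γ)).Finite ∧
        (SwSetP Player.bot (negRun Γ)).Nonempty) := by rw [h]; exact hc
    rw [dif_neg hc', dif_neg hc]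

lemma lastSwitchBitsP_negRun (Γ : Run) :
    lastSwitchBitsP .bot (negRun Γ) = lastSwitchBitsP .top Γ := by
  classical
  have h : SwSetP .bot (negRun Γ) = SwSetP .top Γ := SwSetP_negRun .bot Γ
  have hget : ((negRun Γ).get? (lastSwitchIdxP .top Γ)).bind (fun lm => asBits lm.2) =
      (Γ.get? (lastSwitchIdxP .top Γ)).bind (fun lm => asBits lm.2) := by
    rcases hb : Γ.get? (lastSwitchIdxP .top Γ) with _ | b
    · simp [negRun, Stream'.Seq.map_get?, hb]
    · simp [negRun, Stream'.Seq.map_get?, hb]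
  unfold lastSwitchBitsP
  by_cases hc : (SwSetP Player.top Γ).Finite ∧ (SwSetP Player.top Γ).Nonempty
  · have hc' : (SwSetP Player.bot (negRun Γ)).Finite ∧
        (SwSetP Player.bot (negRun Γ)).Nonempty := by rw [h]; exact hc
    rw [if_pos hc', if_pos hc, lastSwitchIdxP_negRun, hget]
  · have hc' : ¬((SwSetP Player.bot (negRun Γ)).Finite ∧
        (SwSetP Player.bot (negRun Γ)).Nonempty) := by rw [h]; exact hc
    rw [if_neg hc', if_neg hc]

end Aux


/-- Let `Δ` be a legal run of `⫯ᴸ¬A ∨ ⫰ᵀA`, with `Sg = Δ^{1.}`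
and `Pn = Δ^{2.}`. If either (a) `Pn` has infinitely many switch moves, or (b) both
`Pn` and `Sg` have finitely many switch moves and `Sg^{≼t'} = ¬(Pn^{≼s'})`, where
`s` (resp. `t`) is the last switch move of `Pn` (resp. of `Sg`, made by `⊤`), the
empty bitstring if there are none, and `s'`, `t'` result from appending infinitely
many `0`s, then `Δ` is a `⊤`-won run of `⫯ᴸ¬A ∨ ⫰ᵀA`. -/
theorem win_coloose_or_tight (A : Game) (hA : A.IsGame) (Δ Sg Pn : Run)
    (hSg : Sg = proj 1 Δ) (hPn : Pn = proj 2 Δ)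
    (hleg : (Game.por (coloose A.neg) (tight A)).legal Δ)
    (hcase :
      (SwSetP .bot Pn).Infinite ∨
      ((SwSetP .bot Pn).Finite ∧ (SwSetP .top Sg).Finite ∧
        subAt (ezero (lastSwitchBitsP .top Sg)) Sg =
          negRun (subAt (ezero (lastSwitchBitsP .bot Pn)) Pn))) :
    (Game.por (coloose A.neg) (tight A)).won .top Δ := by
  classical
  subst hSg hPn
  set Sg := proj 1 Δ with hSg
  set Pn := proj 2 Δ with hPn
  have hwin : (coloose A.neg).won .top (proj 1 Δ) ∨ (tight A).won .top (proj 2 Δ) := by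
    rcases hcase with hinf | ⟨hfinP, hfinS, heq⟩
    · right
      refine Or.inl ⟨hleg.2.2, ?_⟩
      show (if (SwSetP .bot Pn).Finite ∧ A.won .bot (subAt (tStream Pn) Pn)
        then Player.bot else Player.top) = Player.top
      exact if_neg (fun hc => hinf hc.1)
    · by_cases hw : A.won .bot (subAt (tStream Pn) Pn)
      · left
        have hco : coloose A.neg = (loose A).neg := by
          unfold coloose; rw [Game.neg_neg']
        rw [hco]
        refine Or.inl ⟨?_, ?_⟩
        · have h2 := hleg.2.1; rwa [hco] at h2
        · have hsub : subAt (tStream (negRun Sg)) (negRun Sg)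
              = subAt (tStream Pn) Pn := by
            show subAt (ezero (lastSwitchBitsP .bot (negRun Sg))) (negRun Sg) = _
            rw [lastSwitchBitsP_negRun, subAt_negRun, heq, negRun_negRun]
            rfl
          show ((loose A).wins (negRun Sg)).opp = Player.top
          have hls : (loose A).wins (negRun Sg) = Player.bot := by
            show (if (SwSetP .bot (negRun Sg)).Finite ∧
                A.won .bot (subAt (tStream (negRun Sg)) (negRun Sg))
              then Player.bot else Player.top) = Player.bot
            refine if_pos ⟨?_, ?_⟩
            · rw [SwSetP_negRun]; exact hfinS
            · rw [hsub]; exact hw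
          rw [hls]; rfl
      · right
        refine Or.inl ⟨hleg.2.2, ?_⟩
        show (if (SwSetP .bot Pn).Finite ∧ A.won .bot (subAt (tStream Pn) Pn)
          then Player.bot else Player.top) = Player.top
        exact if_neg (fun hc => hw hc.2)
  refine Or.inl ⟨hleg, ?_⟩
  show (if (coloose A.neg).won .top (proj 1 Δ) ∨ (tight A).won .top (proj 2 Δ)
    then Player.top else Player.bot) = Player.top
  exact if_pos hwin
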